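/- arXiv:2004.09458 — 3 statements merged into one kernel-verified Lean document; each statement's English description precedes it below -/
import Mathlib

section
/- Let $f(z) = \int \varphi(z - u)\, dG(u)$ be a mixture of standard normal densities. Then for all $z$ with $f(z) > 0$: $0 \leq f''(z)/f(z) + 1 \leq -\log(2\pi f(z)^2)$. -/
/-!
Differentiating twice under the integral, `f'' + f = ∫ (z - u)² φ(z - u) dG(u) ≥ 0`.
Since `log φ(x) = -log (2π) / 2 - x² / 2`, this second moment equals
`-log (2π) f - 2 ∫ φ log φ dG`, and Jensen's inequality for the convex function `t ↦ t log t`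
bounds `∫ φ log φ dG` below by `f log f`.
-/

open MeasureTheory ProbabilityTheory Real

lemma gaussianPDFReal_zero_one (x : ℝ) :
    gaussianPDFReal 0 1 x = (√(2 * π))⁻¹ * exp (-(x ^ 2) / 2) := by
  simp [gaussianPDFReal]

lemma abs_mul_exp_neg_sq_div_two_le_one (x : ℝ) : |x| * exp (-(x ^ 2) / 2) ≤ 1 := by
  have h := add_one_le_exp (x ^ 2 / 2)
  rw [neg_div, exp_neg, ← div_eq_mul_inv, div_le_one (exp_pos _)]
  nlinarith [sq_abs x, sq_nonneg (|x| - 1)]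

lemma sq_mul_exp_neg_sq_div_two_le_two (x : ℝ) : x ^ 2 * exp (-(x ^ 2) / 2) ≤ 2 := by
  have h := add_one_le_exp (x ^ 2 / 2)
  rw [neg_div, exp_neg, ← div_eq_mul_inv, div_le_iff₀ (exp_pos _)]
  linarith

lemma hasDerivAt_gaussianPDFReal_zero_one (x : ℝ) :
    HasDerivAt (gaussianPDFReal 0 1) (-x * gaussianPDFReal 0 1 x) x := by
  have h : HasDerivAt (fun y : ℝ ↦ -(y ^ 2) / 2) (-x) x :=
    ((hasDerivAt_pow 2 x).neg.div_const 2).congr_deriv (by push_cast; ring)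
  rw [funext gaussianPDFReal_zero_one]
  exact (h.exp.const_mul _).congr_deriv (by ring)

lemma hasDerivAt_neg_mul_gaussianPDFReal_zero_one (x : ℝ) :
    HasDerivAt (fun x ↦ -x * gaussianPDFReal 0 1 x) ((x ^ 2 - 1) * gaussianPDFReal 0 1 x) x := by
  refine ((hasDerivAt_id x).neg.mul (hasDerivAt_gaussianPDFReal_zero_one x)).congr_deriv ?_
  simp only [Pi.neg_apply, id]
  ring

lemma abs_gaussianPDFReal_zero_one_le (x : ℝ) :
    |gaussianPDFReal 0 1 x| ≤ (√(2 * π))⁻¹ := by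
  rw [abs_of_nonneg (gaussianPDFReal_nonneg 0 1 x), gaussianPDFReal_zero_one]
  exact mul_le_of_le_one_right (inv_nonneg.2 (sqrt_nonneg _))
    (exp_le_one_iff.2 (by nlinarith [sq_nonneg x]))

lemma abs_neg_mul_gaussianPDFReal_zero_one_le (x : ℝ) :
    |-x * gaussianPDFReal 0 1 x| ≤ (√(2 * π))⁻¹ := by
  rw [neg_mul, abs_neg, abs_mul, abs_of_nonneg (gaussianPDFReal_nonneg 0 1 x),
    gaussianPDFReal_zero_one, mul_left_comm]
  exact mul_le_of_le_one_right (inv_nonneg.2 (sqrt_nonneg _))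
    (abs_mul_exp_neg_sq_div_two_le_one x)

lemma abs_sq_mul_gaussianPDFReal_zero_one_le (x : ℝ) :
    |x ^ 2 * gaussianPDFReal 0 1 x| ≤ 2 * (√(2 * π))⁻¹ := by
  rw [abs_of_nonneg (mul_nonneg (sq_nonneg x) (gaussianPDFReal_nonneg 0 1 x)),
    gaussianPDFReal_zero_one, mul_left_comm]
  linarith [mul_le_mul_of_nonneg_left (sq_mul_exp_neg_sq_div_two_le_two x)
    (inv_nonneg.2 (sqrt_nonneg (2 * π)))]

lemma abs_sq_sub_one_mul_gaussianPDFReal_zero_one_le (x : ℝ) :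
    |(x ^ 2 - 1) * gaussianPDFReal 0 1 x| ≤ 3 * (√(2 * π))⁻¹ := by
  rw [sub_one_mul]
  linarith [abs_sub (x ^ 2 * gaussianPDFReal 0 1 x) (gaussianPDFReal 0 1 x),
    abs_sq_mul_gaussianPDFReal_zero_one_le x, abs_gaussianPDFReal_zero_one_le x]

lemma log_gaussianPDFReal_zero_one (x : ℝ) :
    log (gaussianPDFReal 0 1 x) = -(log (2 * π) / 2) - x ^ 2 / 2 := by
  rw [gaussianPDFReal_zero_one, log_mul (by positivity) (exp_ne_zero _), log_exp, log_inv,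
    log_sqrt (by positivity)]
  ring

lemma gaussianPDFReal_zero_one_mul_log (x : ℝ) :
    gaussianPDFReal 0 1 x * log (gaussianPDFReal 0 1 x) =
      -(log (2 * π) * gaussianPDFReal 0 1 x + x ^ 2 * gaussianPDFReal 0 1 x) / 2 := by
  rw [log_gaussianPDFReal_zero_one]
  ring

section Convolution

variable {G : Measure ℝ} [IsFiniteMeasure G] {g g' : ℝ → ℝ} {C C' : ℝ}

lemma integrable_comp_sub_of_abs_le (hg : Measurable g) (hC : ∀ x, |g x| ≤ C) (z : ℝ) :
    Integrable (fun u ↦ g (z - u)) G :=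
  .of_bound (hg.comp (measurable_const.sub measurable_id)).aestronglyMeasurable C
    (ae_of_all _ fun u ↦ hC (z - u))

lemma hasDerivAt_integral_comp_sub (hg : ∀ x, HasDerivAt g (g' x) x) (hC : ∀ x, |g x| ≤ C)
    (hC' : ∀ x, |g' x| ≤ C') (z : ℝ) :
    HasDerivAt (fun z ↦ ∫ u, g (z - u) ∂G) (∫ u, g' (z - u) ∂G) z := by
  have hg'_eq : g' = deriv g := funext fun x ↦ (hg x).deriv.symm
  have hg_meas : Measurable g :=
    (continuous_iff_continuousAt.2 fun x ↦ (hg x).continuousAt).measurable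
  have hg'_meas : Measurable g' := hg'_eq ▸ measurable_deriv g
  refine (hasDerivAt_integral_of_dominated_loc_of_deriv_le (bound := fun _ ↦ C') Filter.univ_mem
    (.of_forall fun w ↦ (integrable_comp_sub_of_abs_le hg_meas hC w).aestronglyMeasurable)
    (integrable_comp_sub_of_abs_le hg_meas hC z)
    (integrable_comp_sub_of_abs_le hg'_meas hC' z).aestronglyMeasurable
    (ae_of_all _ fun u w _ ↦ hC' (w - u)) (integrable_const C')
    (ae_of_all _ fun u w _ ↦ ?_)).2
  simpa [Function.comp_def] using (hg (w - u)).comp w ((hasDerivAt_id w).sub_const u)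

end Convolution

lemma mul_log_integral_le_integral_mul_log {α : Type*} [MeasurableSpace α] {μ : Measure α}
    [IsProbabilityMeasure μ] {g : α → ℝ} (hg : 0 ≤ᵐ[μ] g) (hg_int : Integrable g μ)
    (hg_log : Integrable (fun x ↦ g x * log (g x)) μ) :
    (∫ x, g x ∂μ) * log (∫ x, g x ∂μ) ≤ ∫ x, g x * log (g x) ∂μ :=
  convexOn_mul_log.map_integral_le continuous_mul_log.continuousOn isClosed_Ici hg hg_int hg_log

section GaussianMixture

variable {G : Measure ℝ}

lemma integrable_gaussianPDFReal_comp_sub [IsFiniteMeasure G] (z : ℝ) :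
    Integrable (fun u ↦ gaussianPDFReal 0 1 (z - u)) G :=
  integrable_comp_sub_of_abs_le (measurable_gaussianPDFReal 0 1)
    abs_gaussianPDFReal_zero_one_le z

lemma integrable_sq_mul_gaussianPDFReal_comp_sub [IsFiniteMeasure G] (z : ℝ) :
    Integrable (fun u ↦ (z - u) ^ 2 * gaussianPDFReal 0 1 (z - u)) G :=
  integrable_comp_sub_of_abs_le (g := fun x ↦ x ^ 2 * gaussianPDFReal 0 1 x)
    (by fun_prop) abs_sq_mul_gaussianPDFReal_zero_one_le z

lemma integral_sq_mul_gaussianPDFReal_comp_sub_le [IsProbabilityMeasure G] {z : ℝ}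
    (hpos : 0 < ∫ u, gaussianPDFReal 0 1 (z - u) ∂G) :
    ∫ u, (z - u) ^ 2 * gaussianPDFReal 0 1 (z - u) ∂G ≤
      -((∫ u, gaussianPDFReal 0 1 (z - u) ∂G) *
        log (2 * π * (∫ u, gaussianPDFReal 0 1 (z - u) ∂G) ^ 2)) := by
  set m := ∫ u, gaussianPDFReal 0 1 (z - u) ∂G
  set A := ∫ u, (z - u) ^ 2 * gaussianPDFReal 0 1 (z - u) ∂G
  have hφ := integrable_gaussianPDFReal_comp_sub (G := G) z
  have hsq := integrable_sq_mul_gaussianPDFReal_comp_sub (G := G) z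
  have hlog : Integrable
      (fun u ↦ gaussianPDFReal 0 1 (z - u) * log (gaussianPDFReal 0 1 (z - u))) G := by
    simp_rw [gaussianPDFReal_zero_one_mul_log]
    exact ((hφ.const_mul _).add hsq).neg.div_const 2
  have hentropy :
      ∫ u, gaussianPDFReal 0 1 (z - u) * log (gaussianPDFReal 0 1 (z - u)) ∂G =
        -(log (2 * π) * m + A) / 2 := by
    simp_rw [gaussianPDFReal_zero_one_mul_log]
    rw [integral_div, integral_neg, integral_add (hφ.const_mul _) hsq, integral_const_mul]
  have hjensen := mul_log_integral_le_integral_mul_log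
    (ae_of_all _ fun u ↦ gaussianPDFReal_nonneg 0 1 (z - u)) hφ hlog
  rw [hentropy] at hjensen
  rw [log_mul (by positivity) (pow_ne_zero 2 hpos.ne'), log_pow]
  push_cast
  linarith

end GaussianMixture

/-- Second-derivative bound for Gaussian mixtures (Jiang–Zhang Lemma A.1):
`0 ≤ f''(z)/f(z) + 1 ≤ -log(2π f(z)²)` wherever `f(z) > 0`, for
`f(z) = ∫ φ(z - u) dG(u)` a mixture of standard normal densities. -/
theorem stmt8
    (G : Measure ℝ) [IsProbabilityMeasure G]
    (φ f : ℝ → ℝ)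
    (hφ : ∀ x, φ x = (Real.sqrt (2 * Real.pi))⁻¹ * Real.exp (-(x ^ 2) / 2))
    (hf : ∀ z, f z = ∫ u, φ (z - u) ∂G) :
    ∀ z, 0 < f z →
      0 ≤ deriv (deriv f) z / f z + 1
      ∧ deriv (deriv f) z / f z + 1 ≤ -Real.log (2 * Real.pi * (f z) ^ 2) := by
  intro z hz
  obtain rfl : φ = gaussianPDFReal 0 1 := funext fun x ↦ by rw [hφ, gaussianPDFReal_zero_one]
  have hf' : deriv f = fun w ↦ ∫ u, -(w - u) * gaussianPDFReal 0 1 (w - u) ∂G := by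
    rw [funext hf]
    exact funext fun w ↦ (hasDerivAt_integral_comp_sub hasDerivAt_gaussianPDFReal_zero_one
      abs_gaussianPDFReal_zero_one_le
      abs_neg_mul_gaussianPDFReal_zero_one_le w).deriv
  have hf'' : deriv (deriv f) z = ∫ u, ((z - u) ^ 2 - 1) * gaussianPDFReal 0 1 (z - u) ∂G := by
    rw [hf']
    exact (hasDerivAt_integral_comp_sub hasDerivAt_neg_mul_gaussianPDFReal_zero_one
      abs_neg_mul_gaussianPDFReal_zero_one_le
      abs_sq_sub_one_mul_gaussianPDFReal_zero_one_le z).deriv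
  have hratio : deriv (deriv f) z / f z + 1 =
      (∫ u, (z - u) ^ 2 * gaussianPDFReal 0 1 (z - u) ∂G) / f z := by
    rw [hf'', div_add_one hz.ne', hf z]
    simp_rw [sub_one_mul]
    rw [integral_sub (integrable_sq_mul_gaussianPDFReal_comp_sub z)
      (integrable_gaussianPDFReal_comp_sub z), sub_add_cancel]
  rw [hratio]
  refine ⟨div_nonneg (integral_nonneg fun u ↦ ?_) hz.le, ?_⟩
  · exact mul_nonneg (sq_nonneg _) (gaussianPDFReal_nonneg 0 1 _)
  · rw [div_le_iff₀ hz, mul_comm, mul_neg, hf z]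
    exact integral_sq_mul_gaussianPDFReal_comp_sub_le (hf z ▸ hz)
end

section
/- Under the regression discontinuity setup with exogenous noise and ratio-form estimand $\tau_\gamma = \frac{\mathbb{E}[\gamma_+(Z) Y \mathbf{1}\{Z \geq c\}]}{\mathbb{E}[\gamma_+(Z)\mathbf{1}\{Z \geq c\}]} - \frac{\mathbb{E}[\gamma_-(Z) Y \mathbf{1}\{Z < c\}]}{\mathbb{E}[\gamma_-(Z)\mathbf{1}\{Z < c\}]}$, suppose $\tau(u) = \tau$ is constant, $|\alpha_{(0)}(u) - \mu_{\gamma,-}| \leq M$ for all $u$ (where $\mu_{\gamma,-}$ is the second ratio above), and $\mathbb{E}[h_+(U)] > 0$. Then $|\tau_\gamma - \tau| \leq \frac{M\, \mathbb{E}[|h_+(U) - h_-(U)|]}{\mathbb{E}[h_+(U)]}$. -/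
/-!
Writing `hp = h₊`, `hm = h₋` and `a = α₀`, the identification assumptions turn both ratios into
`G`-averages: `τ_γ = ∫ (a + τ₀) hp / ∫ hp - μ` with `μ = ∫ a hm / ∫ hm`. Hence
`τ_γ - τ₀ = ∫ (a - μ) hp / ∫ hp`, and since `μ` is exactly the `hm`-weighted mean of `a`,
`∫ (a - μ) hm = 0` may be subtracted from the numerator. This leaves `∫ (a - μ) (hp - hm)`,
which is at most `M ∫ |hp - hm|` in absolute value.
-/

open MeasureTheory

section WeightedMean

variable {α : Type*} [MeasurableSpace α] {G : Measure α} {a h hp hm : α → ℝ} {μ M τ₀ : ℝ}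

lemma integral_sub_mul_eq_zero_of_eq_div (hint : Integrable (fun u => (a u - μ) * h u) G)
    (hh : Integrable h G) (h0 : ∫ u, h u ∂G ≠ 0)
    (hμ : μ = (∫ u, a u * h u ∂G) / ∫ u, h u ∂G) :
    ∫ u, (a u - μ) * h u ∂G = 0 := by
  have hsplit : ∫ u, a u * h u ∂G = ∫ u, (a u - μ) * h u ∂G + μ * ∫ u, h u ∂G := by
    rw [← integral_const_mul, ← integral_add hint (hh.const_mul μ)]
    congr 1 with u
    ring
  rw [eq_div_iff h0] at hμ
  linarith

lemma abs_integral_mul_le_of_abs_le (hg : Integrable h G) (hM : ∀ u, |a u| ≤ M) :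
    |∫ u, a u * h u ∂G| ≤ M * ∫ u, |h u| ∂G := by
  rw [← Real.norm_eq_abs, ← integral_const_mul M fun u => |h u|]
  refine norm_integral_le_of_norm_le (hg.abs.const_mul M) (ae_of_all _ fun u => ?_)
  rw [Real.norm_eq_abs, abs_mul]
  exact mul_le_mul_of_nonneg_right (hM u) (abs_nonneg _)

theorem abs_integral_add_mul_div_integral_sub_le (ha : AEStronglyMeasurable a G)
    (hp_pos : 0 < ∫ u, hp u ∂G) (hm_ne : ∫ u, hm u ∂G ≠ 0)
    (hμ : μ = (∫ u, a u * hm u ∂G) / ∫ u, hm u ∂G) (hM : ∀ u, |a u - μ| ≤ M) :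
    |(∫ u, (a u + τ₀) * hp u ∂G) / (∫ u, hp u ∂G) - μ - τ₀|
      ≤ M * (∫ u, |hp u - hm u| ∂G) / ∫ u, hp u ∂G := by
  have hp_int : Integrable hp G := .of_integral_ne_zero hp_pos.ne'
  have hm_int : Integrable hm G := .of_integral_ne_zero hm_ne
  have hbdd : ∀ᵐ u ∂G, ‖a u - μ‖ ≤ M := ae_of_all _ hM
  have hdev_p : Integrable (fun u => (a u - μ) * hp u) G :=
    hp_int.bdd_mul (ha.sub aestronglyMeasurable_const) hbdd
  have hdev_m : Integrable (fun u => (a u - μ) * hm u) G :=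
    hm_int.bdd_mul (ha.sub aestronglyMeasurable_const) hbdd
  have hcentred : ∫ u, (a u - μ) * hm u ∂G = 0 :=
    integral_sub_mul_eq_zero_of_eq_div hdev_m hm_int hm_ne hμ
  have hnum : ∫ u, (a u + τ₀) * hp u ∂G
      = ∫ u, (a u - μ) * (hp u - hm u) ∂G + (μ + τ₀) * ∫ u, hp u ∂G := by
    simp_rw [mul_sub]
    rw [integral_sub hdev_p hdev_m, hcentred, sub_zero, ← integral_const_mul,
      ← integral_add hdev_p (hp_int.const_mul _)]
    congr 1 with u
    ring
  have hbias : (∫ u, (a u + τ₀) * hp u ∂G) / (∫ u, hp u ∂G) - μ - τ₀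
      = (∫ u, (a u - μ) * (hp u - hm u) ∂G) / ∫ u, hp u ∂G := by
    rw [hnum]
    field_simp
    ring
  rw [hbias, abs_div, abs_of_pos hp_pos]
  exact div_le_div_of_nonneg_right
    (abs_integral_mul_le_of_abs_le (hp_int.sub hm_int) hM) hp_pos.le

end WeightedMean

section Identification

variable {Ω : Type*} [MeasurableSpace Ω] {P : Measure Ω} {G lam : Measure ℝ}
  {Y Z : Ω → ℝ} {α : ℝ → ℝ} {p : ℝ → ℝ → ℝ}

lemma integral_mul_indicator_comp_eq
    (hY : ∀ g : ℝ → ℝ, Measurable g → (∃ C, ∀ z, |g z| ≤ C) →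
      ∫ ω, Y ω * g (Z ω) ∂P = ∫ u, α u * ∫ z, g z * p z u ∂lam ∂G)
    {s : Set ℝ} (hs : MeasurableSet s) {γ : ℝ → ℝ} (hγ : Measurable γ) {C : ℝ}
    (hγC : ∀ z, |γ z| ≤ C) :
    ∫ ω, Y ω * s.indicator γ (Z ω) ∂P = ∫ u, α u * ∫ z in s, γ z * p z u ∂lam ∂G := by
  rw [hY _ (hγ.indicator hs) ⟨C, fun z => (norm_indicator_le_norm_self γ z).trans (hγC z)⟩]
  congr 1 with u
  rw [← integral_indicator hs]
  simp only [Set.indicator_mul_left]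

end Identification

theorem stmt14_general
    {Ω : Type*} [MeasurableSpace Ω] (P : Measure Ω)
    (U Z Y0 Y1 : Ω → ℝ)
    (G : Measure ℝ)
    (lam : Measure ℝ)
    (p : ℝ → ℝ → ℝ)
    (α0 α1 τ : ℝ → ℝ) (hα0m : Measurable α0)
    (hτdef : ∀ u, τ u = α1 u - α0 u)
    (hJoint0 : ∀ g φf : ℝ → ℝ, Measurable g → Measurable φf →
      (∃ Cg, ∀ z, |g z| ≤ Cg) → (∃ Cf, ∀ u, |φf u| ≤ Cf) →
      ∫ ω, Y0 ω * g (Z ω) * φf (U ω) ∂P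
        = ∫ u, α0 u * (∫ z, g z * p z u ∂lam) * φf u ∂G)
    (hJoint1 : ∀ g φf : ℝ → ℝ, Measurable g → Measurable φf →
      (∃ Cg, ∀ z, |g z| ≤ Cg) → (∃ Cf, ∀ u, |φf u| ≤ Cf) →
      ∫ ω, Y1 ω * g (Z ω) * φf (U ω) ∂P
        = ∫ u, α1 u * (∫ z, g z * p z u ∂lam) * φf u ∂G)
    (hDens : ∀ g : ℝ → ℝ, Measurable g → (∃ Cg, ∀ z, |g z| ≤ Cg) →
      ∫ ω, g (Z ω) ∂P = ∫ u, (∫ z, g z * p z u ∂lam) ∂G)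
    (c : ℝ) (γp γm : ℝ → ℝ) (hγpm : Measurable γp) (hγmm : Measurable γm)
    (Cγ : ℝ) (hγpb : ∀ z, |γp z| ≤ Cγ) (hγmb : ∀ z, |γm z| ≤ Cγ)
    (hplus hminus : ℝ → ℝ)
    (hhp : ∀ u, hplus u = ∫ z in Set.Ici c, γp z * p z u ∂lam)
    (hhm : ∀ u, hminus u = ∫ z in Set.Iio c, γm z * p z u ∂lam)
    (hhppos : 0 < ∫ u, hplus u ∂G) (hhmpos : 0 < ∫ u, hminus u ∂G)
    -- the ratio-form estimand:
    (μγm τγ : ℝ)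
    (hμγm : μγm = (∫ ω, (if Z ω < c then γm (Z ω) * (if c ≤ Z ω then Y1 ω else Y0 ω) else 0) ∂P)
        / (∫ ω, (if Z ω < c then γm (Z ω) else 0) ∂P))
    (hτγ : τγ = (∫ ω, (if c ≤ Z ω then γp (Z ω) * (if c ≤ Z ω then Y1 ω else Y0 ω) else 0) ∂P)
        / (∫ ω, (if c ≤ Z ω then γp (Z ω) else 0) ∂P) - μγm)
    -- constant treatment effect and uniform bound:
    (τ0 : ℝ) (hτconst : ∀ u, τ u = τ0)
    (M : ℝ) (hMa : ∀ u, |α0 u - μγm| ≤ M) :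
    |τγ - τ0| ≤ M * (∫ u, |hplus u - hminus u| ∂G) / (∫ u, hplus u ∂G) := by
  obtain rfl : α1 = fun u => α0 u + τ0 := funext fun u => by linarith [hτdef u, hτconst u]
  have hone : ∃ C, ∀ u : ℝ, |(1 : ℝ)| ≤ C := ⟨1, fun _ => abs_one.le⟩
  have hY0 := fun g hg hgC => by simpa using hJoint0 g _ hg measurable_const hgC hone
  have hY1 := fun g hg hgC => by simpa using hJoint1 g _ hg measurable_const hgC hone
  have hZ : ∀ g : ℝ → ℝ, Measurable g → (∃ C, ∀ z, |g z| ≤ C) →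
      ∫ ω, (1 : ℝ) * g (Z ω) ∂P = ∫ u, (1 : ℝ) * ∫ z, g z * p z u ∂lam ∂G :=
    fun g hg hgC => by simpa using hDens g hg hgC
  have hNp : ∫ ω, (if c ≤ Z ω then γp (Z ω) * (if c ≤ Z ω then Y1 ω else Y0 ω) else 0) ∂P
      = ∫ u, (α0 u + τ0) * hplus u ∂G := by
    simp_rw [hhp, ← integral_mul_indicator_comp_eq hY1 measurableSet_Ici hγpm hγpb]
    congr 1 with ω
    by_cases h : c ≤ Z ω <;> simp [h, mul_comm]
  have hDp : ∫ ω, (if c ≤ Z ω then γp (Z ω) else 0) ∂P = ∫ u, hplus u ∂G := by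
    simpa [hhp, Set.indicator_apply] using
      integral_mul_indicator_comp_eq hZ measurableSet_Ici hγpm hγpb
  have hNm : ∫ ω, (if Z ω < c then γm (Z ω) * (if c ≤ Z ω then Y1 ω else Y0 ω) else 0) ∂P
      = ∫ u, α0 u * hminus u ∂G := by
    simp_rw [hhm, ← integral_mul_indicator_comp_eq hY0 measurableSet_Iio hγmm hγmb]
    congr 1 with ω
    by_cases h : Z ω < c <;> simp [h, not_le.mpr, mul_comm]
  have hDm : ∫ ω, (if Z ω < c then γm (Z ω) else 0) ∂P = ∫ u, hminus u ∂G := by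
    simpa [hhm, Set.indicator_apply] using
      integral_mul_indicator_comp_eq hZ measurableSet_Iio hγmm hγmb
  rw [hNm, hDm] at hμγm
  rw [hτγ, hNp, hDp]
  exact abs_integral_add_mul_div_integral_sub_le hα0m.aestronglyMeasurable hhppos
    hhmpos.ne' hμγm hMa

/-- Bias bound for the ratio-form (self-normalized) weighted estimator under a
constant treatment effect: `|τ_γ - τ| ≤ M E[|h₊(U) - h₋(U)|] / E[h₊(U)]`. -/
theorem stmt14
    {Ω : Type*} [MeasurableSpace Ω] (P : Measure Ω) [IsProbabilityMeasure P]
    (U Z Y0 Y1 : Ω → ℝ)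
    (hUm : Measurable U) (hZm : Measurable Z)
    (hY0m : Measurable Y0) (hY1m : Measurable Y1)
    (CY : ℝ) (hY0b : ∀ ω, |Y0 ω| ≤ CY) (hY1b : ∀ ω, |Y1 ω| ≤ CY)
    (G : Measure ℝ) [IsProbabilityMeasure G]
    (lam : Measure ℝ) [SigmaFinite lam]
    (p : ℝ → ℝ → ℝ) (hpm : Measurable (Function.uncurry p)) (hpnn : ∀ z u, 0 ≤ p z u)
    (α0 α1 τ : ℝ → ℝ) (hα0m : Measurable α0) (hα1m : Measurable α1)
    (hτdef : ∀ u, τ u = α1 u - α0 u)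
    (hJoint0 : ∀ g φf : ℝ → ℝ, Measurable g → Measurable φf →
      (∃ Cg, ∀ z, |g z| ≤ Cg) → (∃ Cf, ∀ u, |φf u| ≤ Cf) →
      ∫ ω, Y0 ω * g (Z ω) * φf (U ω) ∂P
        = ∫ u, α0 u * (∫ z, g z * p z u ∂lam) * φf u ∂G)
    (hJoint1 : ∀ g φf : ℝ → ℝ, Measurable g → Measurable φf →
      (∃ Cg, ∀ z, |g z| ≤ Cg) → (∃ Cf, ∀ u, |φf u| ≤ Cf) →
      ∫ ω, Y1 ω * g (Z ω) * φf (U ω) ∂P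
        = ∫ u, α1 u * (∫ z, g z * p z u ∂lam) * φf u ∂G)
    (hDens : ∀ g : ℝ → ℝ, Measurable g → (∃ Cg, ∀ z, |g z| ≤ Cg) →
      ∫ ω, g (Z ω) ∂P = ∫ u, (∫ z, g z * p z u ∂lam) ∂G)
    (c : ℝ) (γp γm : ℝ → ℝ) (hγpm : Measurable γp) (hγmm : Measurable γm)
    (hγpnn : ∀ z, 0 ≤ γp z) (hγmnn : ∀ z, 0 ≤ γm z)
    (Cγ : ℝ) (hγpb : ∀ z, |γp z| ≤ Cγ) (hγmb : ∀ z, |γm z| ≤ Cγ)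
    (hplus hminus : ℝ → ℝ)
    (hhp : ∀ u, hplus u = ∫ z in Set.Ici c, γp z * p z u ∂lam)
    (hhm : ∀ u, hminus u = ∫ z in Set.Iio c, γm z * p z u ∂lam)
    (hhppos : 0 < ∫ u, hplus u ∂G) (hhmpos : 0 < ∫ u, hminus u ∂G)
    -- the ratio-form estimand:
    (μγm τγ : ℝ)
    (hμγm : μγm = (∫ ω, (if Z ω < c then γm (Z ω) * (if c ≤ Z ω then Y1 ω else Y0 ω) else 0) ∂P)
        / (∫ ω, (if Z ω < c then γm (Z ω) else 0) ∂P))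
    (hτγ : τγ = (∫ ω, (if c ≤ Z ω then γp (Z ω) * (if c ≤ Z ω then Y1 ω else Y0 ω) else 0) ∂P)
        / (∫ ω, (if c ≤ Z ω then γp (Z ω) else 0) ∂P) - μγm)
    -- constant treatment effect and uniform bound:
    (τ0 : ℝ) (hτconst : ∀ u, τ u = τ0)
    (M : ℝ) (hMa : ∀ u, |α0 u - μγm| ≤ M) :
    |τγ - τ0| ≤ M * (∫ u, |hplus u - hminus u| ∂G) / (∫ u, hplus u ∂G) :=
  stmt14_general P U Z Y0 Y1 G lam p α0 α1 τ hα0m hτdef hJoint0 hJoint1 hDens c γp γm hγpm hγmm Cγ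
    hγpb hγmb hplus hminus hhp hhm hhppos hhmpos μγm τγ hμγm hτγ τ0 hτconst M hMa
end

section
/- In the ratio-form setup, suppose $|\alpha_{(0)}(u) - \mu_{\gamma,-}| \leq M$ and $|\tau(u)| \leq M'$ for all $u$, $\mathbb{E}[h_+(U)] > 0$, and let $\bar{w} = \kappa w$ for some $\kappa > 0$ where $w \geq 0$ with $\int w\, dG = 1$, $\mathbb{E}[\bar w(U)] > 0$, and $\tau_w = \int w(u)\tau(u)\, dG(u)$. Then $|\tau_\gamma - \tau_w| \leq M \frac{\mathbb{E}[|h_+(U) - h_-(U)|]}{\mathbb{E}[h_+(U)]} + M' \frac{\mathbb{E}[|h_+(U) - \bar{w}(U)|] + |\mathbb{E}[h_+(U) - \bar{w}(U)]|}{\mathbb{E}[h_+(U)]}$. -/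
/-!
Both ratios of the estimand are identified with ratios of latent integrals:
`τ_γ = ∫ α₁ h₊ / ∫ h₊ - μ` and `μ = ∫ α₀ h₋ / ∫ h₋`. Since `∫ (α₀ - μ) h₋ = 0` and `∫ w = 1`,
for every `κ`
`(∫ h₊) (τ_γ - τ_w) = ∫ (α₀ - μ)(h₊ - h₋) + ∫ τ (h₊ - κ w) - τ_w ∫ (h₊ - κ w)`,
and the three terms are bounded by `|α₀ - μ| ≤ M`, `|τ| ≤ M'` and `|τ_w| ≤ M'`.
-/

open MeasureTheory

section WeightedBias

variable {α : Type*} [MeasurableSpace α] {ν : Measure α}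

theorem abs_integral_mul_le_of_abs_le_s15 {f g : α → ℝ} {M : ℝ} (hg : Integrable g ν)
    (hf : ∀ x, |f x| ≤ M) : |∫ x, f x * g x ∂ν| ≤ M * ∫ x, |g x| ∂ν := by
  rw [← integral_const_mul, ← Real.norm_eq_abs]
  refine norm_integral_le_of_norm_le (hg.abs.const_mul M) (.of_forall fun x => ?_)
  rw [Real.norm_eq_abs, abs_mul]
  exact mul_le_mul_of_nonneg_right (hf x) (abs_nonneg _)

variable {a0 a1 hp hm w : α → ℝ} {μ M M' : ℝ}

theorem ratio_sub_weighted_eq (κ : ℝ)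
    (ha0 : AEStronglyMeasurable a0 ν) (ha1 : AEStronglyMeasurable a1 ν)
    (hp_int : Integrable hp ν) (hm_int : Integrable hm ν) (hw_int : Integrable w ν)
    (hw1 : ∫ x, w x ∂ν = 1) (hm0 : ∫ x, hm x ∂ν ≠ 0) (hp0 : ∫ x, hp x ∂ν ≠ 0)
    (hμ : μ = (∫ x, a0 x * hm x ∂ν) / ∫ x, hm x ∂ν)
    (hM : ∀ x, |a0 x - μ| ≤ M) (hM' : ∀ x, |a1 x - a0 x| ≤ M') :
    (∫ x, a1 x * hp x ∂ν) / (∫ x, hp x ∂ν) - μ - ∫ x, w x * (a1 x - a0 x) ∂ν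
      = ((∫ x, (a0 x - μ) * (hp x - hm x) ∂ν) + (∫ x, (a1 x - a0 x) * (hp x - κ * w x) ∂ν)
        - (∫ x, hp x - κ * w x ∂ν) * ∫ x, w x * (a1 x - a0 x) ∂ν) / ∫ x, hp x ∂ν := by
  have hb0 : ∀ᵐ x ∂ν, ‖a0 x‖ ≤ M + |μ| := .of_forall fun x => by
    simpa using (abs_sub_abs_le_abs_sub (a0 x) μ).trans (hM x)
  have hbd : ∀ᵐ x ∂ν, ‖a1 x - a0 x‖ ≤ M' := .of_forall hM'
  have hd : AEStronglyMeasurable (fun x => a1 x - a0 x) ν := ha1.sub ha0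
  have i0p := hp_int.bdd_mul ha0 hb0
  have i0m := hm_int.bdd_mul ha0 hb0
  have idp := hp_int.bdd_mul hd hbd
  have i1p : Integrable (fun x => a1 x * hp x) ν := by
    refine (idp.add i0p).congr (.of_forall fun x => ?_)
    simp only [Pi.add_apply]
    ring
  have iκwd : Integrable (fun x => κ * (w x * (a1 x - a0 x))) ν := by
    simpa [mul_comm, mul_left_comm] using (hw_int.bdd_mul hd hbd).const_mul κ
  have e1 : ∫ x, (a0 x - μ) * (hp x - hm x) ∂ν
      = (∫ x, a0 x * hp x ∂ν) - μ * (∫ x, hp x ∂ν) := by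
    have hcentre : ∫ x, a0 x * hm x ∂ν - μ * ∫ x, hm x ∂ν = 0 := by
      rw [hμ, div_mul_cancel₀ _ hm0, sub_self]
    rw [← sub_zero (_ - _), ← hcentre, ← integral_const_mul, ← integral_const_mul,
      ← integral_sub i0p (hp_int.const_mul μ), ← integral_sub i0m (hm_int.const_mul μ),
      ← integral_sub (i0p.sub' (hp_int.const_mul μ)) (i0m.sub' (hm_int.const_mul μ))]
    congr 1; ext x; ring
  have e2 : ∫ x, (a1 x - a0 x) * (hp x - κ * w x) ∂ν
      = (∫ x, a1 x * hp x ∂ν) - (∫ x, a0 x * hp x ∂ν) - κ * ∫ x, w x * (a1 x - a0 x) ∂ν := by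
    rw [← integral_sub i1p i0p, ← integral_const_mul, ← integral_sub (i1p.sub' i0p) iκwd]
    congr 1; ext x; ring
  have e3 : ∫ x, hp x - κ * w x ∂ν = (∫ x, hp x ∂ν) - κ := by
    rw [integral_sub hp_int (hw_int.const_mul κ), integral_const_mul, hw1, mul_one]
  rw [e1, e2, e3]
  field_simp
  ring

theorem abs_ratio_sub_weighted_le (κ : ℝ)
    (ha0 : AEStronglyMeasurable a0 ν) (ha1 : AEStronglyMeasurable a1 ν)
    (hp_int : Integrable hp ν) (hm_int : Integrable hm ν) (hw_int : Integrable w ν)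
    (hwnn : ∀ x, 0 ≤ w x) (hw1 : ∫ x, w x ∂ν = 1) (hm0 : ∫ x, hm x ∂ν ≠ 0)
    (hp_pos : 0 < ∫ x, hp x ∂ν)
    (hμ : μ = (∫ x, a0 x * hm x ∂ν) / ∫ x, hm x ∂ν)
    (hM : ∀ x, |a0 x - μ| ≤ M) (hM' : ∀ x, |a1 x - a0 x| ≤ M') :
    |(∫ x, a1 x * hp x ∂ν) / (∫ x, hp x ∂ν) - μ - ∫ x, w x * (a1 x - a0 x) ∂ν|
      ≤ M * (∫ x, |hp x - hm x| ∂ν) / (∫ x, hp x ∂ν)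
        + M' * ((∫ x, |hp x - κ * w x| ∂ν) + |∫ x, hp x - κ * w x ∂ν|) / (∫ x, hp x ∂ν) := by
  have hT1 := abs_integral_mul_le_of_abs_le_s15 (hp_int.sub' hm_int) hM
  have hT2 := abs_integral_mul_le_of_abs_le_s15 (hp_int.sub' (hw_int.const_mul κ)) hM'
  have hS : |∫ x, w x * (a1 x - a0 x) ∂ν| ≤ M' := by
    simpa [mul_comm, abs_of_nonneg (hwnn _), hw1] using abs_integral_mul_le_of_abs_le_s15 hw_int hM'
  rw [ratio_sub_weighted_eq κ ha0 ha1 hp_int hm_int hw_int hw1 hm0 hp_pos.ne' hμ hM hM',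
    abs_div, abs_of_pos hp_pos, ← add_div]
  gcongr
  calc _ ≤ |∫ x, (a0 x - μ) * (hp x - hm x) ∂ν| + |∫ x, (a1 x - a0 x) * (hp x - κ * w x) ∂ν|
        + |∫ x, hp x - κ * w x ∂ν| * |∫ x, w x * (a1 x - a0 x) ∂ν| := by
        rw [← abs_mul]; exact (abs_sub _ _).trans (by gcongr; exact abs_add_le _ _)
    _ ≤ _ := by
      have := mul_le_mul_of_nonneg_left hS (abs_nonneg (∫ x, hp x - κ * w x ∂ν))
      linarith

end WeightedBias

section Identification

variable {Ω : Type*} [MeasurableSpace Ω] {P : Measure Ω} {U Z : Ω → ℝ} {G lam : Measure ℝ}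
  {p : ℝ → ℝ → ℝ} {s : Set ℝ} {γ : ℝ → ℝ} {C : ℝ}

theorem integral_indicator_mul_eq_setIntegral (hs : MeasurableSet s) (u : ℝ) :
    ∫ z, s.indicator γ z * p z u ∂lam = ∫ z in s, γ z * p z u ∂lam := by
  simp_rw [← integral_indicator hs, Set.indicator_mul_left]

theorem exists_abs_indicator_le (hγb : ∀ z, |γ z| ≤ C) : ∃ C', ∀ z, |s.indicator γ z| ≤ C' :=
  ⟨C, fun z => (norm_indicator_le_norm_self γ z).trans (hγb z)⟩

theorem integral_indicator_comp_mul_eq {X Y : Ω → ℝ} {a : ℝ → ℝ}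
    (hJoint : ∀ g φf : ℝ → ℝ, Measurable g → Measurable φf →
      (∃ Cg, ∀ z, |g z| ≤ Cg) → (∃ Cf, ∀ u, |φf u| ≤ Cf) →
      ∫ ω, Y ω * g (Z ω) * φf (U ω) ∂P = ∫ u, a u * (∫ z, g z * p z u ∂lam) * φf u ∂G)
    (hs : MeasurableSet s) (hγ : Measurable γ) (hγb : ∀ z, |γ z| ≤ C)
    (hXY : ∀ ω, Z ω ∈ s → X ω = Y ω) :
    ∫ ω, s.indicator γ (Z ω) * X ω ∂P
      = ∫ u, a u * ∫ z in s, γ z * p z u ∂lam ∂G := by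
  have key := hJoint (s.indicator γ) (fun _ => 1) (hγ.indicator hs) measurable_const
    (exists_abs_indicator_le hγb) ⟨1, by simp⟩
  simp_rw [mul_one, integral_indicator_mul_eq_setIntegral hs] at key
  rw [← key]
  refine integral_congr_ae (.of_forall fun ω => ?_)
  by_cases h : Z ω ∈ s
  · simp only [hXY ω h, mul_comm]
  · simp only [Set.indicator_of_notMem h, zero_mul, mul_zero]

theorem integral_indicator_comp_eq
    (hDens : ∀ g : ℝ → ℝ, Measurable g → (∃ Cg, ∀ z, |g z| ≤ Cg) →
      ∫ ω, g (Z ω) ∂P = ∫ u, (∫ z, g z * p z u ∂lam) ∂G)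
    (hs : MeasurableSet s) (hγ : Measurable γ) (hγb : ∀ z, |γ z| ≤ C) :
    ∫ ω, s.indicator γ (Z ω) ∂P = ∫ u, ∫ z in s, γ z * p z u ∂lam ∂G := by
  simp_rw [← integral_indicator_mul_eq_setIntegral hs]
  exact hDens _ (hγ.indicator hs) (exists_abs_indicator_le hγb)

end Identification

theorem stmt15_general
    {Ω : Type*} [MeasurableSpace Ω] (P : Measure Ω)
    (U Z Y0 Y1 : Ω → ℝ)
    (G : Measure ℝ)
    (lam : Measure ℝ)
    (p : ℝ → ℝ → ℝ)
    (α0 α1 τ : ℝ → ℝ) (hα0m : Measurable α0) (hα1m : Measurable α1)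
    (hτdef : ∀ u, τ u = α1 u - α0 u)
    (hJoint0 : ∀ g φf : ℝ → ℝ, Measurable g → Measurable φf →
      (∃ Cg, ∀ z, |g z| ≤ Cg) → (∃ Cf, ∀ u, |φf u| ≤ Cf) →
      ∫ ω, Y0 ω * g (Z ω) * φf (U ω) ∂P
        = ∫ u, α0 u * (∫ z, g z * p z u ∂lam) * φf u ∂G)
    (hJoint1 : ∀ g φf : ℝ → ℝ, Measurable g → Measurable φf →
      (∃ Cg, ∀ z, |g z| ≤ Cg) → (∃ Cf, ∀ u, |φf u| ≤ Cf) →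
      ∫ ω, Y1 ω * g (Z ω) * φf (U ω) ∂P
        = ∫ u, α1 u * (∫ z, g z * p z u ∂lam) * φf u ∂G)
    (hDens : ∀ g : ℝ → ℝ, Measurable g → (∃ Cg, ∀ z, |g z| ≤ Cg) →
      ∫ ω, g (Z ω) ∂P = ∫ u, (∫ z, g z * p z u ∂lam) ∂G)
    (c : ℝ) (γp γm : ℝ → ℝ) (hγpm : Measurable γp) (hγmm : Measurable γm)
    (Cγ : ℝ) (hγpb : ∀ z, |γp z| ≤ Cγ) (hγmb : ∀ z, |γm z| ≤ Cγ)
    (hplus hminus : ℝ → ℝ)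
    (hhp : ∀ u, hplus u = ∫ z in Set.Ici c, γp z * p z u ∂lam)
    (hhm : ∀ u, hminus u = ∫ z in Set.Iio c, γm z * p z u ∂lam)
    (hhppos : 0 < ∫ u, hplus u ∂G) (hhmpos : 0 < ∫ u, hminus u ∂G)
    -- the ratio-form estimand:
    (μγm τγ : ℝ)
    (hμγm : μγm = (∫ ω, (if Z ω < c then γm (Z ω) * (if c ≤ Z ω then Y1 ω else Y0 ω) else 0) ∂P)
        / (∫ ω, (if Z ω < c then γm (Z ω) else 0) ∂P))
    (hτγ : τγ = (∫ ω, (if c ≤ Z ω then γp (Z ω) * (if c ≤ Z ω then Y1 ω else Y0 ω) else 0) ∂P)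
        / (∫ ω, (if c ≤ Z ω then γp (Z ω) else 0) ∂P) - μγm)
    -- uniform bounds:
    (M M' : ℝ) (hMa : ∀ u, |α0 u - μγm| ≤ M) (hM'τ : ∀ u, |τ u| ≤ M')
    -- target weight function, known up to the multiplicative constant κ:
    (w wbar : ℝ → ℝ) (hwnn : ∀ u, 0 ≤ w u)
    (hwint : ∫ u, w u ∂G = 1)
    (κ : ℝ) (hwbar : ∀ u, wbar u = κ * w u)
    (τw : ℝ) (hτw : τw = ∫ u, w u * τ u ∂G) :
    |τγ - τw| ≤ M * (∫ u, |hplus u - hminus u| ∂G) / (∫ u, hplus u ∂G)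
      + M' * ((∫ u, |hplus u - wbar u| ∂G) + |∫ u, hplus u - wbar u ∂G|)
          / (∫ u, hplus u ∂G) := by
  have hnum_p : ∫ ω, (if c ≤ Z ω then γp (Z ω) * (if c ≤ Z ω then Y1 ω else Y0 ω) else 0) ∂P
      = ∫ u, α1 u * hplus u ∂G := by
    have := integral_indicator_comp_mul_eq hJoint1 measurableSet_Ici hγpm hγpb
      (X := fun ω => if c ≤ Z ω then Y1 ω else Y0 ω) fun ω h => if_pos h
    simpa only [Set.indicator_apply, Set.mem_Ici, ite_mul, zero_mul, ← hhp] using this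
  have hden_p : ∫ ω, (if c ≤ Z ω then γp (Z ω) else 0) ∂P = ∫ u, hplus u ∂G := by
    simpa only [Set.indicator_apply, Set.mem_Ici, ← hhp] using
      integral_indicator_comp_eq hDens (measurableSet_Ici (a := c)) hγpm hγpb
  have hnum_m : ∫ ω, (if Z ω < c then γm (Z ω) * (if c ≤ Z ω then Y1 ω else Y0 ω) else 0) ∂P
      = ∫ u, α0 u * hminus u ∂G := by
    have := integral_indicator_comp_mul_eq hJoint0 measurableSet_Iio hγmm hγmb
      (X := fun ω => if c ≤ Z ω then Y1 ω else Y0 ω) fun ω h => if_neg (not_le.2 h)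
    simpa only [Set.indicator_apply, Set.mem_Iio, ite_mul, zero_mul, ← hhm] using this
  have hden_m : ∫ ω, (if Z ω < c then γm (Z ω) else 0) ∂P = ∫ u, hminus u ∂G := by
    simpa only [Set.indicator_apply, Set.mem_Iio, ← hhm] using
      integral_indicator_comp_eq hDens (measurableSet_Iio (a := c)) hγmm hγmb
  obtain rfl : τ = fun u => α1 u - α0 u := funext hτdef
  obtain rfl : wbar = fun u => κ * w u := funext hwbar
  rw [hnum_m, hden_m] at hμγm
  rw [hτγ, hnum_p, hden_p, hτw]
  exact abs_ratio_sub_weighted_le κ hα0m.aestronglyMeasurable hα1m.aestronglyMeasurable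
    (.of_integral_ne_zero hhppos.ne') (.of_integral_ne_zero hhmpos.ne')
    (.of_integral_ne_zero (by simp [hwint])) hwnn hwint hhmpos.ne' hhppos hμγm hMa hM'τ

/-- Bias bound for the ratio-form estimator targeting a weighted treatment
effect `τ_w`, when the target weight function is known only up to a
multiplicative constant `κ`:
`|τ_γ - τ_w| ≤ M E[|h₊-h₋|]/E[h₊] + M' (E[|h₊-w̄|] + |E[h₊-w̄]|)/E[h₊]`. -/
theorem stmt15
    {Ω : Type*} [MeasurableSpace Ω] (P : Measure Ω) [IsProbabilityMeasure P]
    (U Z Y0 Y1 : Ω → ℝ)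
    (hUm : Measurable U) (hZm : Measurable Z)
    (hY0m : Measurable Y0) (hY1m : Measurable Y1)
    (CY : ℝ) (hY0b : ∀ ω, |Y0 ω| ≤ CY) (hY1b : ∀ ω, |Y1 ω| ≤ CY)
    (G : Measure ℝ) [IsProbabilityMeasure G]
    (lam : Measure ℝ) [SigmaFinite lam]
    (p : ℝ → ℝ → ℝ) (hpm : Measurable (Function.uncurry p)) (hpnn : ∀ z u, 0 ≤ p z u)
    (α0 α1 τ : ℝ → ℝ) (hα0m : Measurable α0) (hα1m : Measurable α1)
    (hτdef : ∀ u, τ u = α1 u - α0 u)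
    (hJoint0 : ∀ g φf : ℝ → ℝ, Measurable g → Measurable φf →
      (∃ Cg, ∀ z, |g z| ≤ Cg) → (∃ Cf, ∀ u, |φf u| ≤ Cf) →
      ∫ ω, Y0 ω * g (Z ω) * φf (U ω) ∂P
        = ∫ u, α0 u * (∫ z, g z * p z u ∂lam) * φf u ∂G)
    (hJoint1 : ∀ g φf : ℝ → ℝ, Measurable g → Measurable φf →
      (∃ Cg, ∀ z, |g z| ≤ Cg) → (∃ Cf, ∀ u, |φf u| ≤ Cf) →
      ∫ ω, Y1 ω * g (Z ω) * φf (U ω) ∂P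
        = ∫ u, α1 u * (∫ z, g z * p z u ∂lam) * φf u ∂G)
    (hDens : ∀ g : ℝ → ℝ, Measurable g → (∃ Cg, ∀ z, |g z| ≤ Cg) →
      ∫ ω, g (Z ω) ∂P = ∫ u, (∫ z, g z * p z u ∂lam) ∂G)
    (c : ℝ) (γp γm : ℝ → ℝ) (hγpm : Measurable γp) (hγmm : Measurable γm)
    (hγpnn : ∀ z, 0 ≤ γp z) (hγmnn : ∀ z, 0 ≤ γm z)
    (Cγ : ℝ) (hγpb : ∀ z, |γp z| ≤ Cγ) (hγmb : ∀ z, |γm z| ≤ Cγ)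
    (hplus hminus : ℝ → ℝ)
    (hhp : ∀ u, hplus u = ∫ z in Set.Ici c, γp z * p z u ∂lam)
    (hhm : ∀ u, hminus u = ∫ z in Set.Iio c, γm z * p z u ∂lam)
    (hhppos : 0 < ∫ u, hplus u ∂G) (hhmpos : 0 < ∫ u, hminus u ∂G)
    -- the ratio-form estimand:
    (μγm τγ : ℝ)
    (hμγm : μγm = (∫ ω, (if Z ω < c then γm (Z ω) * (if c ≤ Z ω then Y1 ω else Y0 ω) else 0) ∂P)
        / (∫ ω, (if Z ω < c then γm (Z ω) else 0) ∂P))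
    (hτγ : τγ = (∫ ω, (if c ≤ Z ω then γp (Z ω) * (if c ≤ Z ω then Y1 ω else Y0 ω) else 0) ∂P)
        / (∫ ω, (if c ≤ Z ω then γp (Z ω) else 0) ∂P) - μγm)
    -- uniform bounds:
    (M M' : ℝ) (hMa : ∀ u, |α0 u - μγm| ≤ M) (hM'τ : ∀ u, |τ u| ≤ M')
    -- target weight function, known up to the multiplicative constant κ:
    (w wbar : ℝ → ℝ) (hwm : Measurable w) (hwnn : ∀ u, 0 ≤ w u)
    (hwint : ∫ u, w u ∂G = 1)
    (κ : ℝ) (hκ : 0 < κ) (hwbar : ∀ u, wbar u = κ * w u)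
    (hwbarpos : 0 < ∫ u, wbar u ∂G)
    (τw : ℝ) (hτw : τw = ∫ u, w u * τ u ∂G) :
    |τγ - τw| ≤ M * (∫ u, |hplus u - hminus u| ∂G) / (∫ u, hplus u ∂G)
      + M' * ((∫ u, |hplus u - wbar u| ∂G) + |∫ u, hplus u - wbar u ∂G|)
          / (∫ u, hplus u ∂G) :=
  stmt15_general P U Z Y0 Y1 G lam p α0 α1 τ hα0m hα1m hτdef hJoint0 hJoint1 hDens c γp γm hγpm hγmm
    Cγ hγpb hγmb hplus hminus hhp hhm hhppos hhmpos μγm τγ hμγm hτγ M M' hMa hM'τ w wbar hwnn hwint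
    κ hwbar τw hτw
end
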